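/- In the setting of the SVT iteration for matrix completion, let (X*, Y*) be a primal-dual optimal pair, so that 0 = Z^k − P_Ω(Y^{k−1}) for some Z^k ∈ ∂f_τ(X^k) and 0 = Z* − P_Ω(Y*) for some Z* ∈ ∂f_τ(X*). Then ⟨X^k − X*, P_Ω(Y^{k−1} − Y*)⟩ ≥ ‖X^k − X*‖_F², and consequently, if 2δ_k − δ_k² ≥ β > 0, the residuals r_k := ‖P_Ω(Y^k − Y*)‖_F obey r_k² ≤ r_{k−1}² − β‖X^k − X*‖_F². -/

import Mathlib

open Matrix Filter Topology

noncomputable def frob {n₁ n₂ : ℕ} (X : Matrix (Fin n₁) (Fin n₂) ℝ) : ℝ :=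
  Real.sqrt (∑ i, ∑ j, (X i j) ^ 2)

noncomputable def mInner {n₁ n₂ : ℕ} (X Y : Matrix (Fin n₁) (Fin n₂) ℝ) : ℝ :=
  ∑ i, ∑ j, X i j * Y i j

noncomputable def singVal {n₁ n₂ : ℕ} (X : Matrix (Fin n₁) (Fin n₂) ℝ) (j : Fin n₂) : ℝ :=
  Real.sqrt ((Matrix.isHermitian_conjTranspose_mul_self X).eigenvalues j)

noncomputable def nuclearNorm {n₁ n₂ : ℕ} (X : Matrix (Fin n₁) (Fin n₂) ℝ) : ℝ :=
  ∑ j, singVal X j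

noncomputable def specNorm {n₁ n₂ : ℕ} (X : Matrix (Fin n₁) (Fin n₂) ℝ) : ℝ :=
  ⨆ j, singVal X j

noncomputable def ftau {n₁ n₂ : ℕ} (τ : ℝ) (X : Matrix (Fin n₁) (Fin n₂) ℝ) : ℝ :=
  τ * nuclearNorm X + (1 / 2) * frob X ^ 2

def projSet {n₁ n₂ : ℕ} (Ω : Finset (Fin n₁ × Fin n₂)) (X : Matrix (Fin n₁) (Fin n₂) ℝ) :
    Matrix (Fin n₁) (Fin n₂) ℝ :=
  Matrix.of fun i j => if (i, j) ∈ Ω then X i j else 0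

def IsSubgradAt {n₁ n₂ : ℕ} (f : Matrix (Fin n₁) (Fin n₂) ℝ → ℝ)
    (Z X₀ : Matrix (Fin n₁) (Fin n₂) ℝ) : Prop :=
  ∀ X, f X₀ + mInner Z (X - X₀) ≤ f X

noncomputable def eNorm {m : ℕ} (v : Fin m → ℝ) : ℝ := Real.sqrt (∑ i, v i ^ 2)

noncomputable def eInner {m : ℕ} (v w : Fin m → ℝ) : ℝ := ∑ i, v i * w i


/-!
The nuclear norm is a seminorm, hence convex: expanding `A` in its singular value decomposition,
Cauchy–Schwarz and Bessel give `∑ⱼ ⟪uⱼ, A vⱼ⟫ ≤ ‖A‖_*` for any orthogonal families `u`, `v` of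
vectors of length at most one, with equality for the singular vectors of `A`. So if `Z` is a
subgradient of `f_τ = τ‖·‖_* + ½‖·‖_F²` at `X`, then `Z - X` is a subgradient of the convex
function `τ‖·‖_*` at `X`, and monotonicity of subgradients gives
`⟪X^k - X*, Z^k - Z*⟫ ≥ ‖X^k - X*‖_F²`: the first claim, as `Z^k - Z* = P_Ω(Y^{k-1} - Y*)`.
Feasibility of `X*` turns the dual update into
`P_Ω(Y^k - Y*) = P_Ω(Y^{k-1} - Y*) - δ P_Ω(X^k - X*)`; expanding the square, the cross term is
controlled by the first claim and the quadratic term by `‖P_Ω X‖_F ≤ ‖X‖_F`.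
-/

section SingularVectors

variable {n₁ n₂ : ℕ}

noncomputable def rightSingVec (X : Matrix (Fin n₁) (Fin n₂) ℝ) (j : Fin n₂) : Fin n₂ → ℝ :=
  ⇑((isHermitian_conjTranspose_mul_self X).eigenvectorBasis j)

-- Zero when `singVal X j = 0`, since `0⁻¹ = 0`.
noncomputable def leftSingVec (X : Matrix (Fin n₁) (Fin n₂) ℝ) (j : Fin n₂) : Fin n₁ → ℝ :=
  (singVal X j)⁻¹ • (X *ᵥ rightSingVec X j)

lemma dotProduct_rightSingVec (X : Matrix (Fin n₁) (Fin n₂) ℝ) (i j : Fin n₂) :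
    rightSingVec X i ⬝ᵥ rightSingVec X j = if i = j then 1 else 0 := by
  have h := orthonormal_iff_ite.mp
    (isHermitian_conjTranspose_mul_self X).eigenvectorBasis.orthonormal (i := j) (j := i)
  rw [EuclideanSpace.inner_eq_star_dotProduct, star_trivial] at h
  simpa only [rightSingVec, eq_comm (a := j)] using h

lemma sum_dotProduct_smul_rightSingVec (X : Matrix (Fin n₁) (Fin n₂) ℝ) (w : Fin n₂ → ℝ) :
    ∑ j, (rightSingVec X j ⬝ᵥ w) • rightSingVec X j = w := by
  have h := congrArg WithLp.ofLp
    ((isHermitian_conjTranspose_mul_self X).eigenvectorBasis.sum_repr' (WithLp.toLp 2 w))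
  simpa [EuclideanSpace.inner_eq_star_dotProduct, rightSingVec, dotProduct_comm] using h

lemma mulVec_rightSingVec_dotProduct (X : Matrix (Fin n₁) (Fin n₂) ℝ) (i j : Fin n₂) :
    (X *ᵥ rightSingVec X i) ⬝ᵥ (X *ᵥ rightSingVec X j) =
      if i = j then (isHermitian_conjTranspose_mul_self X).eigenvalues j else 0 := by
  have heig : (Xᵀ * X) *ᵥ rightSingVec X j =
      (isHermitian_conjTranspose_mul_self X).eigenvalues j • rightSingVec X j :=
    (isHermitian_conjTranspose_mul_self X).mulVec_eigenvectorBasis j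
  have hadj : (X *ᵥ rightSingVec X i) ⬝ᵥ (X *ᵥ rightSingVec X j) =
      rightSingVec X i ⬝ᵥ ((Xᵀ * X) *ᵥ rightSingVec X j) := by
    rw [← mulVec_mulVec, dotProduct_mulVec (rightSingVec X i) Xᵀ, vecMul_transpose]
  rw [hadj, heig, dotProduct_smul, dotProduct_rightSingVec]
  split_ifs <;> simp

lemma singVal_sq (X : Matrix (Fin n₁) (Fin n₂) ℝ) (j : Fin n₂) :
    singVal X j ^ 2 = (isHermitian_conjTranspose_mul_self X).eigenvalues j :=
  Real.sq_sqrt (eigenvalues_conjTranspose_mul_self_nonneg X j)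

lemma singVal_nonneg (X : Matrix (Fin n₁) (Fin n₂) ℝ) (j : Fin n₂) : 0 ≤ singVal X j :=
  Real.sqrt_nonneg _

lemma mulVec_rightSingVec (X : Matrix (Fin n₁) (Fin n₂) ℝ) (j : Fin n₂) :
    X *ᵥ rightSingVec X j = singVal X j • leftSingVec X j := by
  rcases eq_or_ne (singVal X j) 0 with h | h
  · have h0 := mulVec_rightSingVec_dotProduct X j j
    rw [if_pos rfl, ← singVal_sq, h, zero_pow two_ne_zero, dotProduct_self_eq_zero] at h0
    rw [h0, h, zero_smul]
  · rw [leftSingVec, smul_smul, mul_inv_cancel₀ h, one_smul]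

lemma dotProduct_leftSingVec (X : Matrix (Fin n₁) (Fin n₂) ℝ) (i j : Fin n₂) :
    leftSingVec X i ⬝ᵥ leftSingVec X j = if i = j ∧ singVal X j ≠ 0 then 1 else 0 := by
  rw [leftSingVec, leftSingVec, smul_dotProduct, dotProduct_smul, mulVec_rightSingVec_dotProduct,
    ← singVal_sq]
  rcases eq_or_ne i j with rfl | hij
  · rcases eq_or_ne (singVal X i) 0 with h | h
    · simp [h]
    · rw [if_pos rfl, if_pos ⟨rfl, h⟩, smul_eq_mul, smul_eq_mul]
      field_simp
  · simp [hij]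

end SingularVectors

def IsSubOrthonormal {ι m : Type*} [Fintype m] (u : ι → m → ℝ) : Prop :=
  Pairwise (fun i j => u i ⬝ᵥ u j = 0) ∧ ∀ i, u i ⬝ᵥ u i ≤ 1

namespace IsSubOrthonormal

variable {ι m : Type*} [Fintype m] {u : ι → m → ℝ}

lemma neg (hu : IsSubOrthonormal u) : IsSubOrthonormal (-u) :=
  ⟨fun i j hij => by simpa using hu.1 hij, fun i => by simpa using hu.2 i⟩

lemma dotProduct_sum_smul [Fintype ι] (hu : IsSubOrthonormal u) (c : ι → ℝ) (i : ι) :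
    u i ⬝ᵥ ∑ j, c j • u j = c i * (u i ⬝ᵥ u i) := by
  classical
  rw [dotProduct_sum, Finset.sum_eq_single_of_mem i (Finset.mem_univ i)
    fun j _ hji => by rw [dotProduct_smul, hu.1 hji.symm, smul_zero], dotProduct_smul, smul_eq_mul]

lemma sum_sq_dotProduct_le [Fintype ι] (hu : IsSubOrthonormal u) (a : m → ℝ) :
    ∑ j, (u j ⬝ᵥ a) ^ 2 ≤ a ⬝ᵥ a := by
  set c := fun j => u j ⬝ᵥ a
  set w := ∑ j, c j • u j
  have hwa : w ⬝ᵥ a = ∑ j, c j ^ 2 := by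
    simp only [w, sum_dotProduct, smul_dotProduct, smul_eq_mul, sq, c]
  have hww : w ⬝ᵥ w ≤ ∑ j, c j ^ 2 := by
    simp only [w, sum_dotProduct, smul_dotProduct, hu.dotProduct_sum_smul, smul_eq_mul]
    refine Finset.sum_le_sum fun j _ => ?_
    rw [← mul_assoc, ← sq]
    exact mul_le_of_le_one_right (sq_nonneg _) (hu.2 j)
  have hres : 0 ≤ (a - w) ⬝ᵥ (a - w) := by simpa using dotProduct_star_self_nonneg (a - w)
  rw [sub_dotProduct, dotProduct_sub, dotProduct_sub, dotProduct_comm a w, hwa] at hres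
  linarith

lemma sum_mul_dotProduct_le_one [Fintype ι] {m' : Type*} [Fintype m'] {v : ι → m' → ℝ}
    (hu : IsSubOrthonormal u) (hv : IsSubOrthonormal v) {a : m → ℝ} {b : m' → ℝ} (ha : a ⬝ᵥ a ≤ 1) (hb : b ⬝ᵥ b ≤ 1) :
    ∑ j, (u j ⬝ᵥ a) * (v j ⬝ᵥ b) ≤ 1 :=
  (Real.sum_mul_le_sqrt_mul_sqrt _ _ _).trans <|
    mul_le_one₀ (Real.sqrt_le_one.mpr ((hu.sum_sq_dotProduct_le a).trans ha)) (Real.sqrt_nonneg _)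
      (Real.sqrt_le_one.mpr ((hv.sum_sq_dotProduct_le b).trans hb))

end IsSubOrthonormal

section NuclearNorm

variable {n₁ n₂ : ℕ}

lemma isSubOrthonormal_rightSingVec (X : Matrix (Fin n₁) (Fin n₂) ℝ) :
    IsSubOrthonormal (rightSingVec X) :=
  ⟨fun i j hij => by simp [dotProduct_rightSingVec, hij],
    fun i => by simp [dotProduct_rightSingVec]⟩

lemma isSubOrthonormal_leftSingVec (X : Matrix (Fin n₁) (Fin n₂) ℝ) :
    IsSubOrthonormal (leftSingVec X) :=
  ⟨fun i j hij => by simp [dotProduct_leftSingVec, hij],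
    fun i => by rw [dotProduct_leftSingVec]; split_ifs <;> norm_num⟩

lemma dotProduct_mulVec_eq_sum_singVal (A : Matrix (Fin n₁) (Fin n₂) ℝ) (x : Fin n₁ → ℝ)
    (y : Fin n₂ → ℝ) :
    x ⬝ᵥ (A *ᵥ y) = ∑ k, singVal A k * ((x ⬝ᵥ leftSingVec A k) * (y ⬝ᵥ rightSingVec A k)) := by
  conv_lhs => rw [← sum_dotProduct_smul_rightSingVec A y]
  simp only [mulVec_sum, mulVec_smul, mulVec_rightSingVec, dotProduct_sum, dotProduct_smul,
    smul_eq_mul, dotProduct_comm (rightSingVec A _) y]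
  exact Finset.sum_congr rfl fun k _ => by ring

lemma sum_dotProduct_mulVec_le_nuclearNorm {ι : Type*} [Fintype ι]
    (A : Matrix (Fin n₁) (Fin n₂) ℝ) {u : ι → Fin n₁ → ℝ} {v : ι → Fin n₂ → ℝ}
    (hu : IsSubOrthonormal u) (hv : IsSubOrthonormal v) :
    ∑ j, u j ⬝ᵥ (A *ᵥ v j) ≤ nuclearNorm A := by
  calc ∑ j, u j ⬝ᵥ (A *ᵥ v j)
      = ∑ k, singVal A k * ∑ j, (u j ⬝ᵥ leftSingVec A k) * (v j ⬝ᵥ rightSingVec A k) := by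
        simp only [dotProduct_mulVec_eq_sum_singVal, Finset.mul_sum]
        exact Finset.sum_comm
    _ ≤ ∑ k, singVal A k * 1 := by
        gcongr with k
        · exact singVal_nonneg A k
        · exact hu.sum_mul_dotProduct_le_one hv ((isSubOrthonormal_leftSingVec A).2 k)
            ((isSubOrthonormal_rightSingVec A).2 k)
    _ = nuclearNorm A := by simp only [mul_one, nuclearNorm]

lemma nuclearNorm_eq_sum_dotProduct (X : Matrix (Fin n₁) (Fin n₂) ℝ) :
    nuclearNorm X = ∑ j, leftSingVec X j ⬝ᵥ (X *ᵥ rightSingVec X j) := by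
  refine Finset.sum_congr rfl fun j _ => ?_
  rw [mulVec_rightSingVec, dotProduct_smul, dotProduct_leftSingVec, smul_eq_mul]
  by_cases h : singVal X j = 0 <;> simp [h]

lemma abs_sum_dotProduct_mulVec_le_nuclearNorm {ι : Type*} [Fintype ι]
    (A : Matrix (Fin n₁) (Fin n₂) ℝ) {u : ι → Fin n₁ → ℝ} {v : ι → Fin n₂ → ℝ}
    (hu : IsSubOrthonormal u) (hv : IsSubOrthonormal v) :
    |∑ j, u j ⬝ᵥ (A *ᵥ v j)| ≤ nuclearNorm A := by
  refine abs_le.mpr ⟨?_, sum_dotProduct_mulVec_le_nuclearNorm A hu hv⟩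
  have := sum_dotProduct_mulVec_le_nuclearNorm A hu.neg hv
  simp only [Pi.neg_apply, neg_dotProduct, Finset.sum_neg_distrib] at this
  linarith

lemma nuclearNorm_zero : nuclearNorm (0 : Matrix (Fin n₁) (Fin n₂) ℝ) = 0 := by
  simp [nuclearNorm_eq_sum_dotProduct]

lemma nuclearNorm_add_le (A B : Matrix (Fin n₁) (Fin n₂) ℝ) :
    nuclearNorm (A + B) ≤ nuclearNorm A + nuclearNorm B := by
  rw [nuclearNorm_eq_sum_dotProduct (A + B)]
  simp only [add_mulVec, dotProduct_add, Finset.sum_add_distrib]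
  exact add_le_add
    (sum_dotProduct_mulVec_le_nuclearNorm A (isSubOrthonormal_leftSingVec _)
      (isSubOrthonormal_rightSingVec _))
    (sum_dotProduct_mulVec_le_nuclearNorm B (isSubOrthonormal_leftSingVec _)
      (isSubOrthonormal_rightSingVec _))

lemma nuclearNorm_smul_le (r : ℝ) (A : Matrix (Fin n₁) (Fin n₂) ℝ) :
    nuclearNorm (r • A) ≤ |r| * nuclearNorm A := by
  rw [nuclearNorm_eq_sum_dotProduct (r • A)]
  simp only [smul_mulVec, dotProduct_smul, smul_eq_mul, ← Finset.mul_sum]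
  calc _ ≤ |r| * |∑ j, leftSingVec (r • A) j ⬝ᵥ (A *ᵥ rightSingVec (r • A) j)| := by
        rw [← abs_mul]
        exact le_abs_self _
    _ ≤ |r| * nuclearNorm A := by
        gcongr
        exact abs_sum_dotProduct_mulVec_le_nuclearNorm A (isSubOrthonormal_leftSingVec _)
          (isSubOrthonormal_rightSingVec _)

noncomputable def nuclearSeminorm : Seminorm ℝ (Matrix (Fin n₁) (Fin n₂) ℝ) :=
  Seminorm.ofSMulLE nuclearNorm nuclearNorm_zero nuclearNorm_add_le nuclearNorm_smul_le

lemma convexOn_nuclearNorm : ConvexOn ℝ Set.univ (nuclearNorm : Matrix (Fin n₁) (Fin n₂) ℝ → ℝ) :=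
  (nuclearSeminorm (n₁ := n₁) (n₂ := n₂)).convexOn

end NuclearNorm

section Frobenius

variable {n₁ n₂ : ℕ}

lemma mInner_comm (A B : Matrix (Fin n₁) (Fin n₂) ℝ) : mInner A B = mInner B A := by
  simp only [mInner, mul_comm]

lemma mInner_sub_left (A B C : Matrix (Fin n₁) (Fin n₂) ℝ) :
    mInner (A - B) C = mInner A C - mInner B C := by
  simp only [mInner, Matrix.sub_apply, sub_mul, Finset.sum_sub_distrib]

lemma mInner_neg_right (A B : Matrix (Fin n₁) (Fin n₂) ℝ) : mInner A (-B) = -mInner A B := by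
  simp only [mInner, Matrix.neg_apply, mul_neg, Finset.sum_neg_distrib]

lemma mInner_smul_right (t : ℝ) (A B : Matrix (Fin n₁) (Fin n₂) ℝ) :
    mInner A (t • B) = t * mInner A B := by
  simp only [mInner, Matrix.smul_apply, smul_eq_mul, Finset.mul_sum, mul_left_comm]

lemma frob_sq (A : Matrix (Fin n₁) (Fin n₂) ℝ) : frob A ^ 2 = mInner A A := by
  rw [frob, Real.sq_sqrt (by positivity)]
  simp only [mInner, sq]

lemma frob_add_smul_sq (A B : Matrix (Fin n₁) (Fin n₂) ℝ) (t : ℝ) :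
    frob (A + t • B) ^ 2 = frob A ^ 2 + 2 * t * mInner A B + t ^ 2 * frob B ^ 2 := by
  simp only [frob_sq, mInner, Matrix.add_apply, Matrix.smul_apply, smul_eq_mul, Finset.mul_sum,
    ← Finset.sum_add_distrib]
  exact Finset.sum_congr rfl fun i _ => Finset.sum_congr rfl fun j _ => by ring

end Frobenius

section Projection

variable {n₁ n₂ : ℕ} (Ω : Finset (Fin n₁ × Fin n₂))

lemma projSet_add (A B : Matrix (Fin n₁) (Fin n₂) ℝ) :
    projSet Ω (A + B) = projSet Ω A + projSet Ω B := by
  ext i j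
  by_cases h : (i, j) ∈ Ω <;> simp [projSet, h]

lemma projSet_sub (A B : Matrix (Fin n₁) (Fin n₂) ℝ) :
    projSet Ω (A - B) = projSet Ω A - projSet Ω B := by
  ext i j
  by_cases h : (i, j) ∈ Ω <;> simp [projSet, h]

lemma projSet_smul (t : ℝ) (A : Matrix (Fin n₁) (Fin n₂) ℝ) :
    projSet Ω (t • A) = t • projSet Ω A := by
  ext i j
  by_cases h : (i, j) ∈ Ω <;> simp [projSet, h]

lemma projSet_projSet (A : Matrix (Fin n₁) (Fin n₂) ℝ) :
    projSet Ω (projSet Ω A) = projSet Ω A := by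
  ext i j
  by_cases h : (i, j) ∈ Ω <;> simp [projSet, h]

lemma mInner_projSet_right (A B : Matrix (Fin n₁) (Fin n₂) ℝ) :
    mInner A (projSet Ω B) = mInner (projSet Ω A) B := by
  refine Finset.sum_congr rfl fun i _ => Finset.sum_congr rfl fun j _ => ?_
  by_cases h : (i, j) ∈ Ω <;> simp [projSet, h]

lemma frob_projSet_le (A : Matrix (Fin n₁) (Fin n₂) ℝ) : frob (projSet Ω A) ≤ frob A := by
  refine Real.sqrt_le_sqrt (Finset.sum_le_sum fun i _ => Finset.sum_le_sum fun j _ => ?_)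
  by_cases h : (i, j) ∈ Ω <;> simp [projSet, h, sq_nonneg]

end Projection

section Subgradient

variable {n₁ n₂ : ℕ}

lemma IsSubgradAt.mInner_sub_nonneg {f : Matrix (Fin n₁) (Fin n₂) ℝ → ℝ}
    {Z₁ Z₂ X₁ X₂ : Matrix (Fin n₁) (Fin n₂) ℝ} (h₁ : IsSubgradAt f Z₁ X₁)
    (h₂ : IsSubgradAt f Z₂ X₂) : 0 ≤ mInner (Z₁ - Z₂) (X₁ - X₂) := by
  have h₁₂ := h₁ X₂
  have h₂₁ := h₂ X₁
  rw [← neg_sub X₁ X₂, mInner_neg_right] at h₁₂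
  rw [mInner_sub_left]
  linarith

lemma IsSubgradAt.of_add_half_frob_sq {g : Matrix (Fin n₁) (Fin n₂) ℝ → ℝ}
    (hg : ConvexOn ℝ Set.univ g) {Z X₀ : Matrix (Fin n₁) (Fin n₂) ℝ}
    (hZ : IsSubgradAt (fun X => g X + 1 / 2 * frob X ^ 2) Z X₀) :
    IsSubgradAt g (Z - X₀) X₀ := by
  intro Y
  set D := Y - X₀
  have hbound : ∀ t ∈ Set.Ioc (0 : ℝ) 1,
      mInner (Z - X₀) D ≤ g Y - g X₀ + t / 2 * frob D ^ 2 := by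
    rintro t ⟨ht₀, ht₁⟩
    have hsub : g X₀ + 1 / 2 * frob X₀ ^ 2 + mInner Z (X₀ + t • D - X₀) ≤
        g (X₀ + t • D) + 1 / 2 * frob (X₀ + t • D) ^ 2 := hZ (X₀ + t • D)
    have hconv : g (X₀ + t • D) ≤ (1 - t) * g X₀ + t * g Y := by
      have hseg : X₀ + t • D = (1 - t) • X₀ + t • Y := by
        simp only [D, smul_sub, sub_smul, one_smul]
        abel
      simpa only [hseg, smul_eq_mul] using
        hg.2 (Set.mem_univ X₀) (Set.mem_univ Y) (by linarith) ht₀.le (by ring)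
    rw [add_sub_cancel_left, mInner_smul_right, frob_add_smul_sq] at hsub
    rw [mInner_sub_left]
    refine le_of_mul_le_mul_left ?_ ht₀
    linarith
  have hlim : Tendsto (fun t : ℝ => g Y - g X₀ + t / 2 * frob D ^ 2) (𝓝[>] 0)
      (𝓝 (g Y - g X₀)) := by
    have hcont : Continuous fun t : ℝ => g Y - g X₀ + t / 2 * frob D ^ 2 := by fun_prop
    simpa using (hcont.tendsto 0).mono_left nhdsWithin_le_nhds
  have := ge_of_tendsto hlim (eventually_of_mem (Ioc_mem_nhdsGT one_pos) hbound)
  linarith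

lemma frob_sub_sq_le_mInner_of_isSubgradAt_ftau {τ : ℝ} (hτ : 0 ≤ τ)
    {Z₁ Z₂ X₁ X₂ : Matrix (Fin n₁) (Fin n₂) ℝ} (h₁ : IsSubgradAt (ftau τ) Z₁ X₁)
    (h₂ : IsSubgradAt (ftau τ) Z₂ X₂) :
    frob (X₁ - X₂) ^ 2 ≤ mInner (X₁ - X₂) (Z₁ - Z₂) := by
  have hg : ConvexOn ℝ Set.univ fun X : Matrix (Fin n₁) (Fin n₂) ℝ => τ * nuclearNorm X :=
    convexOn_nuclearNorm.smul hτ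
  have hmono := (IsSubgradAt.of_add_half_frob_sq hg h₁).mInner_sub_nonneg
    (IsSubgradAt.of_add_half_frob_sq hg h₂)
  rw [sub_sub_sub_comm, mInner_sub_left, ← frob_sq, mInner_comm] at hmono
  linarith

end Subgradient

lemma frob_sub_smul_projSet_sq_le {n₁ n₂ : ℕ} {Ω : Finset (Fin n₁ × Fin n₂)} {δ : ℝ} (hδ : 0 ≤ δ)
    {R d : Matrix (Fin n₁) (Fin n₂) ℝ} (hR : projSet Ω R = R) (hd : frob d ^ 2 ≤ mInner d R) :
    frob (R - δ • projSet Ω d) ^ 2 ≤ frob R ^ 2 - (2 * δ - δ ^ 2) * frob d ^ 2 := by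
  have hRd : mInner R (projSet Ω d) = mInner d R := by
    rw [mInner_projSet_right, hR, mInner_comm]
  have hproj : frob (projSet Ω d) ^ 2 ≤ frob d ^ 2 :=
    pow_le_pow_left₀ (Real.sqrt_nonneg _) (frob_projSet_le Ω d) 2
  rw [sub_eq_add_neg, ← neg_smul, frob_add_smul_sq, hRd]
  nlinarith [mul_le_mul_of_nonneg_left hd hδ, mul_le_mul_of_nonneg_left hproj (sq_nonneg δ)]

/-- One step of the SVT convergence argument. If `Z^k = P_Ω(Y^{k-1})` with
`Z^k ∈ ∂f_τ(X^k)` and `Z* = P_Ω(Y*)` with `Z* ∈ ∂f_τ(X*)` (optimality conditions for a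
primal-dual optimal pair), `P_Ω(X*) = P_Ω(M)`, and `Y^k = Y^{k-1} + δ P_Ω(M - X^k)`, then
`⟨X^k - X*, P_Ω(Y^{k-1} - Y*)⟩ ≥ ‖X^k - X*‖_F²` and, when `2δ - δ² ≥ β > 0`,
`r_k² ≤ r_{k-1}² - β‖X^k - X*‖_F²` where `r_k = ‖P_Ω(Y^k - Y*)‖_F`. -/
theorem svt_step_inequality (n₁ n₂ : ℕ) (τ δ β : ℝ) (hτ : 0 < τ)
    (Ω : Finset (Fin n₁ × Fin n₂)) (M : Matrix (Fin n₁) (Fin n₂) ℝ)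
    (Xk Xs Ykm Ys Yk Zk Zs : Matrix (Fin n₁) (Fin n₂) ℝ)
    (hZk : IsSubgradAt (ftau τ) Zk Xk) (hZkeq : Zk = projSet Ω Ykm)
    (hZs : IsSubgradAt (ftau τ) Zs Xs) (hZseq : Zs = projSet Ω Ys)
    (hfeas : projSet Ω Xs = projSet Ω M)
    (hYk : Yk = Ykm + δ • projSet Ω (M - Xk))
    (hβ : 0 < β) (hδβ : β ≤ 2 * δ - δ ^ 2) :
    frob (Xk - Xs) ^ 2 ≤ mInner (Xk - Xs) (projSet Ω (Ykm - Ys)) ∧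
    frob (projSet Ω (Yk - Ys)) ^ 2 ≤
      frob (projSet Ω (Ykm - Ys)) ^ 2 - β * frob (Xk - Xs) ^ 2 := by
  have hmono : frob (Xk - Xs) ^ 2 ≤ mInner (Xk - Xs) (projSet Ω (Ykm - Ys)) := by
    rw [projSet_sub, ← hZkeq, ← hZseq]
    exact frob_sub_sq_le_mInner_of_isSubgradAt_ftau hτ.le hZk hZs
  refine ⟨hmono, ?_⟩
  have hδ : 0 ≤ δ := by nlinarith
  have hstep : projSet Ω (Yk - Ys) = projSet Ω (Ykm - Ys) - δ • projSet Ω (Xk - Xs) := by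
    simp only [hYk, projSet_sub, projSet_add, projSet_smul, projSet_projSet, ← hfeas]
    module
  rw [hstep]
  calc _ ≤ frob (projSet Ω (Ykm - Ys)) ^ 2 - (2 * δ - δ ^ 2) * frob (Xk - Xs) ^ 2 :=
        frob_sub_smul_projSet_sq_le hδ (projSet_projSet Ω _) hmono
    _ ≤ _ := by gcongr
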